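/- arXiv:2401.07840 — 3 statements merged into one kernel-verified Lean document; each statement's English description precedes it below -/
import Mathlib

section
/- As formal power series over ℚ, the generating function C(x) = ∑_{n≥0} C_n x^n of the Catalan numbers satisfies (1 + (4x - 1)·f(x)) = 2x·C(x), where f(x) = ∑_{n≥0} (2n choose n) x^n. -/
open PowerSeries

/-!
Comparing coefficients of `x^(n+1)`, the identity says `4 binom(2n,n) - binom(2n+2,n+1) = 2 C_n`.
Multiplied by `n + 1` this follows from `(n+1) binom(2n+2,n+1) = 2(2n+1) binom(2n,n)` and
`(n+1) C_n = binom(2n,n)`. Moving the subtracted terms across makes the identity hold already in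
`ℕ⟦X⟧`, from which it is transported to `ℚ⟦X⟧` by the coefficient map.
-/

theorem Nat.centralBinom_succ_add_two_mul_catalan (n : ℕ) :
    (n + 1).centralBinom + 2 * catalan n = 4 * n.centralBinom := by
  refine Nat.eq_of_mul_eq_mul_left n.succ_pos ?_
  calc (n + 1) * ((n + 1).centralBinom + 2 * catalan n)
      = (n + 1) * (n + 1).centralBinom + 2 * ((n + 1) * catalan n) := by ring
    _ = 2 * (2 * n + 1) * n.centralBinom + 2 * n.centralBinom := by
      rw [Nat.succ_mul_centralBinom_succ, succ_mul_catalan_eq_centralBinom]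
    _ = (n + 1) * (4 * n.centralBinom) := by ring

namespace PowerSeries

def centralBinomSeries : ℕ⟦X⟧ := mk Nat.centralBinom

theorem one_add_four_mul_X_mul_centralBinomSeries :
    1 + 4 * X * centralBinomSeries = centralBinomSeries + 2 * X * catalanSeries := by
  ext n
  cases n with
  | zero => simp [centralBinomSeries]
  | succ n =>
    rw [← map_ofNat C 4, ← map_ofNat C 2, mul_comm (C _), mul_comm (C _), mul_assoc, mul_assoc]
    simp only [map_add, coeff_one, if_neg n.succ_ne_zero, coeff_succ_X_mul, coeff_C_mul,
      centralBinomSeries, catalanSeries, coeff_mk, zero_add]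
    exact (Nat.centralBinom_succ_add_two_mul_catalan n).symm

theorem map_centralBinomSeries (R : Type*) [Semiring R] :
    map (Nat.castRingHom R) centralBinomSeries = mk fun n => ((2 * n).choose n : R) := by
  ext n
  simp [centralBinomSeries, Nat.centralBinom_eq_two_mul_choose]

theorem map_catalanSeries (K : Type*) [Field K] [CharZero K] :
    map (Nat.castRingHom K) catalanSeries =
      mk fun n => 1 / (n + 1 : K) * ((2 * n).choose n : K) := by
  ext n
  rw [coeff_map, catalanSeries_coeff, coeff_mk, ← Nat.centralBinom_eq_two_mul_choose,
    ← succ_mul_catalan_eq_centralBinom]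
  push_cast
  field_simp

end PowerSeries

theorem catalan_gf_eq :
    let f : PowerSeries ℚ := PowerSeries.mk fun n => ((2 * n).choose n : ℚ)
    let c : PowerSeries ℚ := PowerSeries.mk fun n => (1 / (n + 1 : ℚ)) * ((2 * n).choose n : ℚ)
    1 + (4 * PowerSeries.X - 1) * f = 2 * PowerSeries.X * c := by
  intro f c
  have h := congrArg (map (Nat.castRingHom ℚ)) one_add_four_mul_X_mul_centralBinomSeries
  simp only [map_add, map_mul, map_one, map_ofNat, map_X, map_centralBinomSeries,
    map_catalanSeries] at h
  linear_combination h
end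

section
/- The generating function S(x) of the large Schröder numbers S_n = ∑_{d=0}^n (1/(d+1))(n+d choose n-d)(2d choose d) satisfies S(x)·(1 - x + r(x)) = 2, where r(x) is the unique formal power series with r(0)=1 and r(x)² = 1-6x+x². -/
/-!
The summand is `C(n+d, 2d) Cat_d`, and `∑ₙ C(n+d, 2d) xⁿ = xᵈ / (1-x)^(2d+1)`, so the series is
`S(x) = C(y) / (1-x)` with `y = x / (1-x)²` and `C` the Catalan series. Substituting `y` into
`C = 1 + y C²` gives `S = 1 + x S + x S²`, so `1 - x - 2xS` squares to `1 - 6x + x²` and has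
constant term `1`; hence it is `r`, and `S (1 - x + r) = 2 (S - x S - x S²) = 2`.
-/

open PowerSeries Finset

namespace PowerSeries

variable {A : Type*} [CommRing A]

theorem coeff_pow_eq_zero_of_lt {b : A⟦X⟧} (hb : constantCoeff b = 0) {n d : ℕ} (h : n < d) :
    coeff n (b ^ d) = 0 := by
  obtain ⟨c, rfl⟩ := X_dvd_iff.mpr hb
  rw [mul_pow, coeff_X_pow_mul', if_neg (by omega)]

theorem coeff_subst_eq_sum_range {b : A⟦X⟧} (hb : constantCoeff b = 0) (f : A⟦X⟧)
    {n N : ℕ} (hn : n ≤ N) :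
    coeff n (f.subst b) = ∑ d ∈ range (N + 1), coeff d f * coeff n (b ^ d) := by
  rw [coeff_subst' (HasSubst.of_constantCoeff_zero' hb)]
  refine finsum_eq_sum_of_support_subset _ fun d hd => ?_
  rw [coe_range, Set.mem_Iio]
  by_contra! h
  exact hd (by simp only [smul_eq_mul, coeff_pow_eq_zero_of_lt hb (by omega : n < d), mul_zero])

theorem coeff_mul_subst {b : A⟦X⟧} (hb : constantCoeff b = 0) (f g : A⟦X⟧) (n : ℕ) :
    coeff n (g * f.subst b) = ∑ d ∈ range (n + 1), coeff d f * coeff n (g * b ^ d) := by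
  simp_rw [coeff_mul, mul_sum]
  rw [sum_comm]
  refine sum_congr rfl fun p hp => ?_
  rw [coeff_subst_eq_sum_range hb f (HasAntidiagonal.antidiagonal.snd_le hp), mul_sum]
  exact sum_congr rfl fun d _ => by ring

theorem coeff_X_pow_mul_invOneSubPow (n d : ℕ) :
    coeff n ((X : A⟦X⟧) ^ d * (invOneSubPow A (2 * d + 1)).val)
      = ((n + d).choose (2 * d) : A) := by
  rw [coeff_X_pow_mul', invOneSubPow_val_succ_eq_mk_add_choose, coeff_mk]
  split_ifs with h
  · congr 2; omega
  · rw [Nat.choose_eq_zero_of_lt (by omega), Nat.cast_zero]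

theorem invOneSubPow_one_mul_X_mul_invOneSubPow_two_pow (d : ℕ) :
    (invOneSubPow A 1).val * (X * (invOneSubPow A 2).val) ^ d
      = X ^ d * (invOneSubPow A (2 * d + 1)).val := by
  simp only [invOneSubPow_eq_inv_one_sub_pow, Units.val_pow_eq_pow_val]
  ring

variable (A) in
def schroederSeries : A⟦X⟧ :=
  mk fun n => ∑ d ∈ range (n + 1), ((n + d).choose (2 * d) * catalan d : A)

theorem schroederSeries_eq_mul_subst_catalanSeries :
    schroederSeries A = (invOneSubPow A 1).val *
      (catalanSeries.map (Nat.castRingHom A)).subst (X * (invOneSubPow A 2).val) := by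
  ext n
  rw [coeff_mul_subst (by simp), schroederSeries, coeff_mk]
  refine sum_congr rfl fun d _ => ?_
  rw [invOneSubPow_one_mul_X_mul_invOneSubPow_two_pow, coeff_X_pow_mul_invOneSubPow, coeff_map,
    catalanSeries_coeff, Nat.coe_castRingHom, mul_comm]

theorem schroederSeries_eq :
    schroederSeries A = 1 + X * schroederSeries A + X * schroederSeries A ^ 2 := by
  set y : A⟦X⟧ := X * (invOneSubPow A 2).val
  set G : A⟦X⟧ := (catalanSeries.map (Nat.castRingHom A)).subst y
  have hG : G ^ 2 * y + 1 = G := by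
    have hy : HasSubst y := HasSubst.of_constantCoeff_zero' (by simp [y])
    have := congrArg (fun f => substAlgHom hy (f.map (Nat.castRingHom A)))
      catalanSeries_sq_mul_X_add_one
    simpa only [map_add, map_mul, map_pow, map_one, map_X, coe_substAlgHom, subst_X hy] using this
  have h1 : (1 - X) * (invOneSubPow A 1).val = 1 := by
    have := (invOneSubPow A 1).inv_val
    rwa [invOneSubPow_inv_eq_one_sub_pow, pow_one] at this
  have h2 : (invOneSubPow A 2).val = (invOneSubPow A 1).val ^ 2 := by
    rw [sq, ← Units.val_mul, ← invOneSubPow_add]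
  rw [schroederSeries_eq_mul_subst_catalanSeries]
  linear_combination G * h1 - hG + X * G ^ 2 * h2

theorem eq_of_sq_eq_sq_of_constantCoeff_eq [NoZeroDivisors A] [IsAddTorsionFree A] {r s : A⟦X⟧}
    (h : r ^ 2 = s ^ 2) (h0 : constantCoeff r = constantCoeff s) (hs : constantCoeff s ≠ 0) :
    r = s := by
  refine (sq_eq_sq_iff_eq_or_eq_neg.mp h).resolve_right fun hneg => hs ?_
  rw [hneg, map_neg] at h0
  exact self_eq_neg.mp h0.symm

end PowerSeries

theorem cast_choose_two_mul_mul_catalan {K : Type*} [Field K] [CharZero K] {n d : ℕ}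
    (h : d ≤ n) :
    ((n + d).choose (2 * d) * catalan d : K)
      = 1 / (d + 1 : K) * ((n + d).choose (n - d) : K) * ((2 * d).choose d : K) := by
  have hsymm : (n + d).choose (n - d) = (n + d).choose (2 * d) := by
    rw [show n - d = n + d - 2 * d by omega, Nat.choose_symm (by omega)]
  have hcat : ((2 * d).choose d : K) = (d + 1) * catalan d := by
    rw [← Nat.centralBinom_eq_two_mul_choose, ← succ_mul_catalan_eq_centralBinom]
    push_cast
    ring
  rw [hsymm, hcat]
  field_simp

theorem schroeder_gf (r : PowerSeries ℚ)
    (h0 : PowerSeries.constantCoeff r = 1)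
    (hr : r ^ 2 = 1 - 6 * PowerSeries.X + PowerSeries.X ^ 2) :
    (PowerSeries.mk fun n =>
        ∑ d ∈ Finset.range (n + 1),
          (1 / (d + 1 : ℚ)) * ((n + d).choose (n - d) : ℚ) * ((2 * d).choose d : ℚ)) *
      (1 - PowerSeries.X + r) = 2 := by
  have hrec := schroederSeries_eq (A := ℚ)
  have hr' : r = 1 - X - 2 * X * schroederSeries ℚ := by
    refine eq_of_sq_eq_sq_of_constantCoeff_eq ?_ (by simp [h0]) (by simp)
    rw [hr]
    linear_combination (4 * X : ℚ⟦X⟧) * hrec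
  convert (show schroederSeries ℚ * (1 - X + r) = 2 by rw [hr']; linear_combination 2 * hrec)
    using 2
  refine congrArg mk (funext fun n => sum_congr rfl fun d hd => ?_)
  exact (cast_choose_two_mul_mul_catalan (Nat.lt_succ_iff.mp (mem_range.mp hd))).symm
end

section
/- The generating function of the sequence a_n = ∑_{d=0}^n (n choose d)(2d choose d) satisfies (∑_{n≥0} a_n x^n)² · (1 - 6x + 5x²) = 1 as formal power series over ℚ. -/
/-!
Write `a n = ∑ d, (n choose d) c d` with `c d = (2d choose d)`. Expanding `a i * a j` and summing
over `i + j = n` with the upper Vandermonde identity `∑_{i+j=n} (i choose k) (j choose l) =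
(n+1 choose k+l+1)` gives `[xⁿ] F² = ∑ s, (n+1 choose s+1) ∑_{k+l=s} c k c l`. The inner sum is
`4 ^ s`, and `∑ s, (n+1 choose s+1) 4 ^ s = ∑_{k ≤ n} 5 ^ k` is the `n`-th coefficient of
`1 / ((1 - x) (1 - 5x))`.
-/

open PowerSeries Finset

theorem Nat.sum_antidiagonal_choose_mul_choose (n c d : ℕ) :
    ∑ p ∈ antidiagonal n, p.1.choose c * p.2.choose d = (n + 1).choose (c + d + 1) := by
  induction n generalizing c d with
  | zero => cases c <;> cases d <;> simp [Nat.choose_eq_zero_of_lt]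
  | succ n ih =>
    rcases c with _ | c
    · rcases d with _ | d
      · simp
      · rw [Finset.Nat.sum_antidiagonal_succ']
        simp_rw [Nat.choose_succ_succ _ d, mul_add, sum_add_distrib, ih]
        simp [Nat.choose_succ_succ' (n + 1), add_assoc]
    · rw [Finset.Nat.sum_antidiagonal_succ]
      simp_rw [Nat.choose_succ_succ _ c, add_mul, sum_add_distrib, ih]
      simp [Nat.choose_succ_succ' (n + 1), add_right_comm _ 1 d]

theorem Finset.Nat.two_mul_sum_antidiagonal_fst_mul {R : Type*} [CommSemiring R]
    (g : ℕ → ℕ → R) (hg : ∀ i j, g i j = g j i) (n : ℕ) :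
    2 * ∑ p ∈ antidiagonal n, (p.1 : R) * g p.1 p.2 = n * ∑ p ∈ antidiagonal n, g p.1 p.2 := by
  calc 2 * ∑ p ∈ antidiagonal n, (p.1 : R) * g p.1 p.2
      = ∑ p ∈ antidiagonal n, ((p.1 : R) * g p.1 p.2 + p.2 * g p.1 p.2) := by
        rw [two_mul, sum_add_distrib]
        nth_rw 2 [← sum_antidiagonal_swap]
        simp only [Prod.fst_swap, Prod.snd_swap, hg]
    _ = n * ∑ p ∈ antidiagonal n, g p.1 p.2 := by
        rw [mul_sum]
        refine sum_congr rfl fun p hp => ?_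
        rw [← add_mul, ← Nat.cast_add, mem_antidiagonal.mp hp]

/-- Weighting the convolution `S n` by the first index and using
`(k + 1) C(2k+2, k+1) = 2 (2k + 1) C(2k, k)` gives `(n + 1) S (n + 1) = 4 (n + 1) S n`. -/
theorem Nat.sum_antidiagonal_centralBinom_mul_centralBinom (n : ℕ) :
    ∑ p ∈ antidiagonal n, p.1.centralBinom * p.2.centralBinom = 4 ^ n := by
  induction n with
  | zero => simp
  | succ n ih =>
    set g : ℕ → ℕ → ℕ := fun i j => i.centralBinom * j.centralBinom
    have hweight := Finset.Nat.two_mul_sum_antidiagonal_fst_mul g fun i j => mul_comm _ _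
    simp only [Nat.cast_id] at hweight
    have hshift : ∑ p ∈ antidiagonal (n + 1), p.1 * g p.1 p.2
        = ∑ p ∈ antidiagonal n, 2 * (2 * p.1 + 1) * g p.1 p.2 := by
      simp [Finset.Nat.sum_antidiagonal_succ, g, ← mul_assoc, Nat.succ_mul_centralBinom_succ]
    apply Nat.eq_of_mul_eq_mul_left n.succ_pos
    calc (n + 1) * ∑ p ∈ antidiagonal (n + 1), g p.1 p.2
        = 4 * (2 * ∑ p ∈ antidiagonal n, p.1 * g p.1 p.2 + ∑ p ∈ antidiagonal n, g p.1 p.2) := by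
          rw [← hweight, hshift, mul_sum, mul_sum, ← sum_add_distrib, mul_sum]
          exact sum_congr rfl fun p _ => by ring
      _ = (n + 1) * 4 ^ (n + 1) := by rw [hweight, ih]; ring

theorem Finset.sum_range_sum_range_eq_sum_range_sum_antidiagonal {M : Type*} [AddCommMonoid M]
    (N : ℕ) (f : ℕ → ℕ → M) (hf : ∀ i j, N ≤ i + j → f i j = 0) :
    ∑ i ∈ range N, ∑ j ∈ range N, f i j = ∑ s ∈ range N, ∑ p ∈ antidiagonal s, f p.1 p.2 := by
  have htail : ∀ i ∈ range N, ∑ j ∈ range N, f i j = ∑ j ∈ range (N - i), f i j := by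
    refine fun i _ => (sum_subset (range_subset_range.mpr (N.sub_le i)) fun j _ hj => ?_).symm
    exact hf i j (by simp only [mem_range] at hj; omega)
  simp only [sum_congr rfl htail, ← sum_range_diag_flip,
    Finset.Nat.sum_antidiagonal_eq_sum_range_succ f]

theorem geom_sum_add_one_eq_sum_choose {R : Type*} [CommSemiring R] (x : R) (m : ℕ) :
    ∑ k ∈ range m, (x + 1) ^ k = ∑ s ∈ range m, (m.choose (s + 1) : R) * x ^ s := by
  induction m with
  | zero => simp
  | succ m ih =>
    rw [sum_range_succ, ih, add_pow]
    simp only [Nat.choose_succ_succ', Nat.cast_add, add_mul, sum_add_distrib]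
    rw [sum_range_succ (fun s => (m.choose (s + 1) : R) * x ^ s)]
    simp only [Nat.choose_succ_self, Nat.cast_zero, zero_mul, add_zero, one_pow, mul_one]
    rw [add_comm]
    exact congrArg (· + _) (sum_congr rfl fun s _ => mul_comm _ _)

def binomialTransform {R : Type*} [Semiring R] (c : ℕ → R) (n : ℕ) : R :=
  ∑ d ∈ range (n + 1), (n.choose d : R) * c d

theorem binomialTransform_eq_sum_range {R : Type*} [Semiring R] (c : ℕ → R) {n N : ℕ}
    (h : n ≤ N) : binomialTransform c n = ∑ d ∈ range (N + 1), (n.choose d : R) * c d := by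
  refine sum_subset (range_subset_range.mpr (by omega)) fun d _ hd => ?_
  rw [Nat.choose_eq_zero_of_lt (by simpa using hd), Nat.cast_zero, zero_mul]

theorem sum_antidiagonal_binomialTransform_mul {R : Type*} [CommSemiring R] (c e : ℕ → R)
    (n : ℕ) :
    ∑ p ∈ antidiagonal n, binomialTransform c p.1 * binomialTransform e p.2 =
      ∑ s ∈ range (n + 1), ((n + 1).choose (s + 1) : R) * ∑ p ∈ antidiagonal s, c p.1 * e p.2 := by
  calc ∑ p ∈ antidiagonal n, binomialTransform c p.1 * binomialTransform e p.2
      = ∑ p ∈ antidiagonal n, ∑ k ∈ range (n + 1), ∑ l ∈ range (n + 1),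
          (p.1.choose k : R) * p.2.choose l * (c k * e l) := by
        refine sum_congr rfl fun p hp => ?_
        have hsum := mem_antidiagonal.mp hp
        rw [binomialTransform_eq_sum_range c (show p.1 ≤ n by omega),
          binomialTransform_eq_sum_range e (show p.2 ≤ n by omega), sum_mul_sum]
        exact sum_congr rfl fun k _ => sum_congr rfl fun l _ => by ring
    _ = ∑ k ∈ range (n + 1), ∑ l ∈ range (n + 1),
          ((n + 1).choose (k + l + 1) : R) * (c k * e l) := by
        rw [sum_comm]
        refine sum_congr rfl fun k _ => ?_
        rw [sum_comm]
        refine sum_congr rfl fun l _ => ?_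
        rw [← sum_mul, ← Nat.sum_antidiagonal_choose_mul_choose]
        push_cast
        rfl
    _ = _ := by
        rw [sum_range_sum_range_eq_sum_range_sum_antidiagonal]
        · refine sum_congr rfl fun s _ => ?_
          rw [mul_sum]
          exact sum_congr rfl fun p hp => by rw [mem_antidiagonal.mp hp]
        · intro k l h
          rw [Nat.choose_eq_zero_of_lt (by omega), Nat.cast_zero, zero_mul]

theorem a026375_gf_sq :
    (PowerSeries.mk fun n =>
        ∑ d ∈ Finset.range (n + 1), (n.choose d : ℚ) * ((2 * d).choose d : ℚ)) ^ 2 *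
      (1 - 6 * PowerSeries.X + 5 * PowerSeries.X ^ 2) = 1 := by
  have hconv (s : ℕ) :
      ∑ p ∈ antidiagonal s, (p.1.centralBinom : ℚ) * p.2.centralBinom = 4 ^ s := by
    exact_mod_cast Nat.sum_antidiagonal_centralBinom_mul_centralBinom s
  have hsq : PowerSeries.mk (binomialTransform fun d => (d.centralBinom : ℚ)) ^ 2 =
      rescale (5 : ℚ) (PowerSeries.mk 1) * PowerSeries.mk 1 := by
    ext n
    rw [sq, coeff_mul, coeff_mul, rescale_mk]
    simp only [coeff_mk, Pi.one_apply, mul_one]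
    rw [sum_antidiagonal_binomialTransform_mul, Finset.Nat.sum_antidiagonal_eq_sum_range_succ_mk]
    simp only [hconv, ← geom_sum_add_one_eq_sum_choose]
    norm_num
  have hfactor : (1 - 6 * X + 5 * X ^ 2 : ℚ⟦X⟧) = rescale (5 : ℚ) (1 - X) * (1 - X) := by
    rw [map_sub, map_one, rescale_X, map_ofNat]
    ring
  change PowerSeries.mk (binomialTransform fun d => (d.centralBinom : ℚ)) ^ 2 * _ = 1
  rw [hsq, hfactor, mul_mul_mul_comm, ← map_mul, mk_one_mul_one_sub_eq_one, map_one, one_mul]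
end
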